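/- arXiv:2406.00888 — 6 statements merged into one kernel-verified Lean document; each statement's English description precedes it below -/
import Mathlib

section
/- (Proposition 1) For any policy π, the KL-constrained objective value of π can be expressed in terms of the soft-optimal policy π* as J(π) = J(π*) − α · ∑_x p(x) · KL(π(·|x) ‖ π*(·|x)). -/
/-- Key per-prompt identity: for any positive normalized `q`,
`∑ y, q y * (r y - α log (q y / piref y)) = V - α * ∑ y, q y * log (q y / pistar y)`. -/
lemma per_prompt_identity {Y : Type*} [Fintype Y]
    (piref q : Y → ℝ) (hq_pos : ∀ y, 0 < q y) (hq_sum : ∑ y, q y = 1)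
    (href_pos : ∀ y, 0 < piref y)
    (r : Y → ℝ) (α : ℝ) (hα : 0 < α) (V : ℝ)
    (pistar : Y → ℝ)
    (hpistar : ∀ y, pistar y = piref y * Real.exp ((r y - V) / α)) :
    ∑ y, q y * (r y - α * Real.log (q y / piref y))
      = V - α * ∑ y, q y * Real.log (q y / pistar y) := by
  have key : ∀ y, q y * (r y - α * Real.log (q y / piref y))
      = q y * V - α * (q y * Real.log (q y / pistar y)) := by
    intro y
    have hlog : Real.log (q y / pistar y)
        = Real.log (q y / piref y) - (r y - V) / α := by
      rw [hpistar y, Real.log_div (ne_of_gt (hq_pos y))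
        (ne_of_gt (mul_pos (href_pos y) (Real.exp_pos _))), Real.log_mul (ne_of_gt (href_pos y)) (Real.exp_ne_zero _),
        Real.log_exp, Real.log_div (ne_of_gt (hq_pos y)) (ne_of_gt (href_pos y))]
      ring
    rw [hlog]
    field_simp
    ring
  rw [Finset.sum_congr rfl fun y _ => key y, Finset.sum_sub_distrib,
    ← Finset.sum_mul, hq_sum, ← Finset.mul_sum]
  ring

/-- Proposition 1: For any policy π, the KL-constrained objective value of π
can be expressed in terms of the soft-optimal policy π* as
J(π) = J(π*) − α · ∑_x p(x) · KL(π(·|x) ‖ π*(·|x)). -/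
theorem objective_eq_opt_sub_kl
    {X Y : Type*} [Fintype X] [Fintype Y] [Nonempty X] [Nonempty Y]
    (p : X → ℝ) (hp_nonneg : ∀ x, 0 ≤ p x) (hp_sum : ∑ x, p x = 1)
    (piref : X → Y → ℝ)
    (href_pos : ∀ x y, 0 < piref x y)
    (href_sum : ∀ x, ∑ y, piref x y = 1)
    (pi' : X → Y → ℝ)
    (hpi'_pos : ∀ x y, 0 < pi' x y)
    (hpi'_sum : ∀ x, ∑ y, pi' x y = 1)
    (r : X → Y → ℝ) (α : ℝ) (hα : 0 < α)
    (Vstar : X → ℝ)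
    (hV : ∀ x, Vstar x = α * Real.log (∑ y, piref x y * Real.exp (r x y / α)))
    (pistar : X → Y → ℝ)
    (hpistar : ∀ x y, pistar x y = piref x y * Real.exp ((r x y - Vstar x) / α)) :
    ∑ x, p x * ∑ y, pi' x y * (r x y - α * Real.log (pi' x y / piref x y))
      = (∑ x, p x * ∑ y, pistar x y * (r x y - α * Real.log (pistar x y / piref x y)))
        - α * ∑ x, p x * ∑ y, pi' x y * Real.log (pi' x y / pistar x y) := by
  have hstar_pos : ∀ x y, 0 < pistar x y := fun x y => by
    exact hpistar x y ▸ mul_pos (href_pos x y) (Real.exp_pos _)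
  have hstar_sum : ∀ x, ∑ y, pistar x y = 1 := by
    intro x
    have hZpos : 0 < ∑ y, piref x y * Real.exp (r x y / α) := by
      apply Finset.sum_pos (fun y _ => mul_pos (href_pos x y) (Real.exp_pos _)) Finset.univ_nonempty
    have : ∀ y, pistar x y = (piref x y * Real.exp (r x y / α)) * Real.exp (-(Vstar x) / α) := by
      intro y
      rw [hpistar x y, mul_assoc, ← Real.exp_add]
      congr 1
      ring
    rw [Finset.sum_congr rfl fun y _ => this y, ← Finset.sum_mul]
    rw [hV x, neg_div, mul_div_cancel_left₀ _ (ne_of_gt hα),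
      Real.exp_neg, Real.exp_log hZpos, mul_inv_cancel₀ (ne_of_gt hZpos)]
  have h1 : ∀ x, ∑ y, pi' x y * (r x y - α * Real.log (pi' x y / piref x y))
      = Vstar x - α * ∑ y, pi' x y * Real.log (pi' x y / pistar x y) :=
    fun x => per_prompt_identity (piref x) (pi' x) (hpi'_pos x) (hpi'_sum x)
      (href_pos x) (r x) α hα (Vstar x) (pistar x) (hpistar x)
  have h2 : ∀ x, ∑ y, pistar x y * (r x y - α * Real.log (pistar x y / piref x y))
      = Vstar x := by
    intro x
    have := per_prompt_identity (piref x) (pistar x) (hstar_pos x) (hstar_sum x)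
      (href_pos x) (r x) α hα (Vstar x) (pistar x) (hpistar x)
    simpa [div_self (ne_of_gt (hstar_pos x _)), Real.log_one] using this
  simp only [h1, h2]
  rw [Finset.mul_sum, ← Finset.sum_sub_distrib]
  exact Finset.sum_congr rfl fun x _ => by ring
end

section
/- The soft-optimal policy maximizes the KL-constrained objective: for every policy π, J(π) ≤ J(π*). -/
/-- The soft-optimal policy maximizes the KL-constrained objective:
for every policy π, J(π) ≤ J(π*). -/
theorem softOptimal_maximizes_objective
    {X Y : Type*} [Fintype X] [Fintype Y] [Nonempty X] [Nonempty Y]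
    (p : X → ℝ) (hp_nonneg : ∀ x, 0 ≤ p x) (hp_sum : ∑ x, p x = 1)
    (piref : X → Y → ℝ)
    (href_pos : ∀ x y, 0 < piref x y)
    (href_sum : ∀ x, ∑ y, piref x y = 1)
    (r : X → Y → ℝ) (α : ℝ) (hα : 0 < α)
    (Vstar : X → ℝ)
    (hV : ∀ x, Vstar x = α * Real.log (∑ y, piref x y * Real.exp (r x y / α)))
    (pistar : X → Y → ℝ)
    (hpistar : ∀ x y, pistar x y = piref x y * Real.exp ((r x y - Vstar x) / α)) :
    ∀ pi' : X → Y → ℝ, (∀ x y, 0 < pi' x y) → (∀ x, ∑ y, pi' x y = 1) →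
      ∑ x, p x * ∑ y, pi' x y * (r x y - α * Real.log (pi' x y / piref x y))
        ≤ ∑ x, p x * ∑ y, pistar x y * (r x y - α * Real.log (pistar x y / piref x y)) := by
  intro pi' hpos hsum
  have hstar_pos : ∀ x y, 0 < pistar x y := by
    intro x y
    rw [hpistar]
    exact mul_pos (href_pos x y) (Real.exp_pos _)
  -- sum of pistar over y is 1
  have hstar_sum : ∀ x, ∑ y, pistar x y = 1 := by
    intro x
    have hS : 0 < ∑ y, piref x y * Real.exp (r x y / α) := by
      apply Finset.sum_pos
      · intro y _; exact mul_pos (href_pos x y) (Real.exp_pos _)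
      · exact Finset.univ_nonempty
    have hVα : Real.exp (Vstar x / α) = ∑ y, piref x y * Real.exp (r x y / α) := by
      have : Vstar x / α = Real.log (∑ y, piref x y * Real.exp (r x y / α)) := by
        rw [hV]; field_simp
      rw [this, Real.exp_log hS]
    have hterm : ∀ y, pistar x y
        = piref x y * Real.exp (r x y / α) * (Real.exp (Vstar x / α))⁻¹ := by
      intro y
      rw [hpistar, sub_div, Real.exp_sub, div_eq_mul_inv]
      ring
    rw [Finset.sum_congr rfl (fun y _ => hterm y), ← Finset.sum_mul, hVα]
    exact mul_inv_cancel₀ (ne_of_gt hS)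
  -- key pointwise identity
  have hkey : ∀ x y, r x y - α * Real.log (pistar x y / piref x y) = Vstar x := by
    intro x y
    rw [hpistar, mul_comm (piref x y), mul_div_assoc, div_self (ne_of_gt (href_pos x y)),
      mul_one, Real.log_exp]
    have : α * ((r x y - Vstar x) / α) = r x y - Vstar x := by field_simp
    linarith
  have hkey' : ∀ x y, r x y - α * Real.log (pi' x y / piref x y)
      = Vstar x - α * Real.log (pi' x y / pistar x y) := by
    intro x y
    have h1 : Real.log (pi' x y / piref x y)
        = Real.log (pi' x y / pistar x y) + Real.log (pistar x y / piref x y) := by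
      rw [← Real.log_mul
        (ne_of_gt (div_pos (hpos x y) (hstar_pos x y)))
        (ne_of_gt (div_pos (hstar_pos x y) (href_pos x y)))]
      congr 1
      rw [div_mul_div_comm, mul_comm (pi' x y) (pistar x y)]
      rw [mul_div_mul_left _ _ (ne_of_gt (hstar_pos x y))]
    rw [h1, mul_add]
    have := hkey x y
    linarith
  -- per-x inequality
  apply Finset.sum_le_sum
  intro x _
  apply mul_le_mul_of_nonneg_left _ (hp_nonneg x)
  have hR : ∑ y, pistar x y * (r x y - α * Real.log (pistar x y / piref x y)) = Vstar x := by
    rw [Finset.sum_congr rfl (fun y _ => by rw [hkey x y]), ← Finset.sum_mul, hstar_sum, one_mul]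
  have hL : ∑ y, pi' x y * (r x y - α * Real.log (pi' x y / piref x y))
      = Vstar x - α * ∑ y, pi' x y * Real.log (pi' x y / pistar x y) := by
    rw [Finset.sum_congr rfl (fun y _ => by rw [hkey' x y])]
    rw [Finset.sum_congr rfl (fun y _ => mul_sub (pi' x y) _ _)]
    rw [Finset.sum_sub_distrib, ← Finset.sum_mul, hsum, one_mul, Finset.mul_sum]
    congr 1
    apply Finset.sum_congr rfl
    intro y _; ring
  rw [hR, hL]
  -- Gibbs: KL ≥ 0
  have hKL : 0 ≤ ∑ y, pi' x y * Real.log (pi' x y / pistar x y) := by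
    have h : ∀ y, pi' x y * Real.log (pistar x y / pi' x y)
        ≤ pistar x y - pi' x y := by
      intro y
      have hlog := Real.log_le_sub_one_of_pos (div_pos (hstar_pos x y) (hpos x y))
      have h2 := mul_le_mul_of_nonneg_left hlog (le_of_lt (hpos x y))
      calc pi' x y * Real.log (pistar x y / pi' x y)
          ≤ pi' x y * (pistar x y / pi' x y - 1) := h2
        _ = pistar x y - pi' x y := by
            rw [mul_sub, mul_one, mul_comm (pi' x y),
              div_mul_cancel₀ _ (ne_of_gt (hpos x y))]
    have hsum2 : ∑ y, pi' x y * Real.log (pistar x y / pi' x y) ≤ 0 := by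
      calc ∑ y, pi' x y * Real.log (pistar x y / pi' x y)
          ≤ ∑ y, (pistar x y - pi' x y) := Finset.sum_le_sum (fun y _ => h y)
        _ = 0 := by rw [Finset.sum_sub_distrib, hstar_sum, hsum]; ring
    have hneg : ∀ y, pi' x y * Real.log (pi' x y / pistar x y)
        = -(pi' x y * Real.log (pistar x y / pi' x y)) := by
      intro y
      rw [Real.log_div (ne_of_gt (hpos x y)) (ne_of_gt (hstar_pos x y)),
        Real.log_div (ne_of_gt (hstar_pos x y)) (ne_of_gt (hpos x y))]
      ring
    rw [Finset.sum_congr rfl (fun y _ => hneg y), Finset.sum_neg_distrib]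
    linarith
  nlinarith [hα.le]
end

section
/- The soft-optimal policy is the unique maximizer of the KL-constrained objective on the support of the prompt distribution: if a policy π satisfies J(π) = J(π*), then π(y|x) = π*(y|x) for every completion y and every prompt x with p(x) > 0. -/
open Finset

/-- Gibbs' inequality: relative entropy is nonpositive in this form. -/
lemma gibbs_le {Y : Type*} [Fintype Y] (q s : Y → ℝ)
    (hq : ∀ y, 0 < q y) (hs : ∀ y, 0 < s y)
    (hqs : ∑ y, q y = 1) (hss : ∑ y, s y = 1) :
    ∑ y, q y * Real.log (s y / q y) ≤ 0 := by
  have h : ∀ y ∈ Finset.univ, q y * Real.log (s y / q y) ≤ q y * (s y / q y - 1) := by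
    intro y _
    exact mul_le_mul_of_nonneg_left
      (Real.log_le_sub_one_of_pos (div_pos (hs y) (hq y))) (hq y).le
  calc ∑ y, q y * Real.log (s y / q y) ≤ ∑ y, q y * (s y / q y - 1) :=
        Finset.sum_le_sum h
    _ = ∑ y, (s y - q y) := by
        refine Finset.sum_congr rfl fun y _ => ?_
        rw [mul_sub, mul_one, mul_div_cancel₀ _ (hq y).ne']
    _ = 0 := by rw [Finset.sum_sub_distrib, hqs, hss]; ring

/-- Equality case of Gibbs' inequality. -/
lemma gibbs_eq {Y : Type*} [Fintype Y] (q s : Y → ℝ)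
    (hq : ∀ y, 0 < q y) (hs : ∀ y, 0 < s y)
    (hqs : ∑ y, q y = 1) (hss : ∑ y, s y = 1)
    (h0 : ∑ y, q y * Real.log (s y / q y) = 0) :
    ∀ y, q y = s y := by
  by_contra hcon
  push_neg at hcon
  obtain ⟨y₀, hy₀⟩ := hcon
  have hlt : ∑ y, q y * Real.log (s y / q y) < ∑ y, (s y - q y) := by
    refine Finset.sum_lt_sum (fun y _ => ?_) ⟨y₀, Finset.mem_univ _, ?_⟩
    · calc q y * Real.log (s y / q y) ≤ q y * (s y / q y - 1) :=
          mul_le_mul_of_nonneg_left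
            (Real.log_le_sub_one_of_pos (div_pos (hs y) (hq y))) (hq y).le
        _ = s y - q y := by rw [mul_sub, mul_one, mul_div_cancel₀ _ (hq y).ne']
    · have hne : s y₀ / q y₀ ≠ 1 := by
        intro h
        rw [div_eq_one_iff_eq (hq y₀).ne'] at h
        exact hy₀ h.symm
      calc q y₀ * Real.log (s y₀ / q y₀) < q y₀ * (s y₀ / q y₀ - 1) :=
            (mul_lt_mul_iff_right₀ (hq y₀)).2
              (Real.log_lt_sub_one_of_pos (div_pos (hs y₀) (hq y₀)) hne)
        _ = s y₀ - q y₀ := by rw [mul_sub, mul_one, mul_div_cancel₀ _ (hq y₀).ne']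
  rw [Finset.sum_sub_distrib, hqs, hss] at hlt
  linarith

/-- Decomposition of the per-prompt objective. -/
lemma J_decomp {Y : Type*} [Fintype Y] (piref pistar q r : Y → ℝ) (α V : ℝ)
    (href : ∀ y, 0 < piref y) (hstar : ∀ y, 0 < pistar y) (hq : ∀ y, 0 < q y)
    (hsum : ∑ y, q y = 1)
    (hr : ∀ y, r y = V + α * Real.log (pistar y / piref y)) :
    ∑ y, q y * (r y - α * Real.log (q y / piref y))
      = V + α * ∑ y, q y * Real.log (pistar y / q y) := by
  have key : ∀ y, q y * (r y - α * Real.log (q y / piref y))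
      = q y * V + α * (q y * Real.log (pistar y / q y)) := by
    intro y
    rw [hr y, Real.log_div (hstar y).ne' (href y).ne',
      Real.log_div (hq y).ne' (href y).ne', Real.log_div (hstar y).ne' (hq y).ne']
    ring
  simp only [key, Finset.sum_add_distrib, ← Finset.sum_mul, hsum, ← Finset.mul_sum]
  ring

/-- The soft-optimal policy is the unique maximizer of the KL-constrained
objective on the support of the prompt distribution: if a policy π satisfies J(π) = J(π*),
then π(y|x) = π*(y|x) for every completion y and every prompt x with p(x) > 0. -/
theorem softOptimal_unique_maximizer
    {X Y : Type*} [Fintype X] [Fintype Y] [Nonempty X] [Nonempty Y]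
    (p : X → ℝ) (hp_nonneg : ∀ x, 0 ≤ p x) (hp_sum : ∑ x, p x = 1)
    (piref : X → Y → ℝ)
    (href_pos : ∀ x y, 0 < piref x y)
    (href_sum : ∀ x, ∑ y, piref x y = 1)
    (pi' : X → Y → ℝ)
    (hpi'_pos : ∀ x y, 0 < pi' x y)
    (hpi'_sum : ∀ x, ∑ y, pi' x y = 1)
    (r : X → Y → ℝ) (α : ℝ) (hα : 0 < α)
    (Vstar : X → ℝ)
    (hV : ∀ x, Vstar x = α * Real.log (∑ y, piref x y * Real.exp (r x y / α)))
    (pistar : X → Y → ℝ)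
    (hpistar : ∀ x y, pistar x y = piref x y * Real.exp ((r x y - Vstar x) / α))
    (heq : ∑ x, p x * ∑ y, pi' x y * (r x y - α * Real.log (pi' x y / piref x y))
      = ∑ x, p x * ∑ y, pistar x y * (r x y - α * Real.log (pistar x y / piref x y))) :
    ∀ y x, 0 < p x → pi' x y = pistar x y := by
  have hstar_pos : ∀ x y, 0 < pistar x y := fun x y => by
    rw [hpistar]; exact mul_pos (href_pos x y) (Real.exp_pos _)
  -- exp (Vstar x / α) equals the partition sum
  have hS_pos : ∀ x, 0 < ∑ y, piref x y * Real.exp (r x y / α) := fun x =>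
    Finset.sum_pos (fun y _ => mul_pos (href_pos x y) (Real.exp_pos _)) univ_nonempty
  have hexpV : ∀ x, Real.exp (Vstar x / α) = ∑ y, piref x y * Real.exp (r x y / α) := by
    intro x
    rw [hV x, mul_comm, mul_div_assoc, div_self hα.ne', mul_one, Real.exp_log (hS_pos x)]
  have hstar_sum : ∀ x, ∑ y, pistar x y = 1 := by
    intro x
    have : ∀ y, pistar x y = piref x y * Real.exp (r x y / α) / Real.exp (Vstar x / α) := by
      intro y
      rw [hpistar, sub_div, Real.exp_sub]; ring
    simp only [this]
    rw [← Finset.sum_div, ← hexpV x, div_self (Real.exp_pos _).ne']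
  -- reward in terms of pistar
  have hr : ∀ x y, r x y = Vstar x + α * Real.log (pistar x y / piref x y) := by
    intro x y
    rw [hpistar, mul_comm (piref x y), mul_div_assoc, div_self (href_pos x y).ne', mul_one,
      Real.log_exp, mul_div_cancel₀ _ hα.ne']
    ring
  set D : X → ℝ := fun x => ∑ y, pi' x y * Real.log (pistar x y / pi' x y) with hD
  have h1 : ∀ x, ∑ y, pi' x y * (r x y - α * Real.log (pi' x y / piref x y))
      = Vstar x + α * D x := fun x =>
    J_decomp (piref x) (pistar x) (pi' x) (r x) α (Vstar x)
      (href_pos x) (hstar_pos x) (hpi'_pos x) (hpi'_sum x) (hr x)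
  have h2 : ∀ x, ∑ y, pistar x y * (r x y - α * Real.log (pistar x y / piref x y))
      = Vstar x := by
    intro x
    have := J_decomp (piref x) (pistar x) (pistar x) (r x) α (Vstar x)
      (href_pos x) (hstar_pos x) (hstar_pos x) (hstar_sum x) (hr x)
    simp only [div_self (hstar_pos x _).ne', Real.log_one, mul_zero,
      Finset.sum_const_zero] at this
    simpa using this
  simp only [h1, h2] at heq
  have hsum0 : ∑ x, p x * (α * D x) = 0 := by
    have : ∑ x, p x * (Vstar x + α * D x)
        = ∑ x, p x * Vstar x + ∑ x, p x * (α * D x) := by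
      rw [← Finset.sum_add_distrib]
      exact Finset.sum_congr rfl fun x _ => by ring
    rw [this] at heq
    linarith
  have hD_nonpos : ∀ x, D x ≤ 0 := fun x =>
    gibbs_le (pi' x) (pistar x) (hpi'_pos x) (hstar_pos x) (hpi'_sum x) (hstar_sum x)
  have hterm : ∀ x ∈ Finset.univ, (0:ℝ) ≤ -(p x * (α * D x)) := by
    intro x _
    have : p x * (α * D x) ≤ 0 :=
      mul_nonpos_of_nonneg_of_nonpos (hp_nonneg x)
        (mul_nonpos_of_nonneg_of_nonpos hα.le (hD_nonpos x))
    linarith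
  have hzero : ∀ x ∈ Finset.univ, -(p x * (α * D x)) = 0 := by
    rw [← Finset.sum_eq_zero_iff_of_nonneg hterm, Finset.sum_neg_distrib, hsum0, neg_zero]
  intro y x hpx
  have hDx : D x = 0 := by
    have := hzero x (Finset.mem_univ x)
    have h := neg_eq_zero.mp this
    rcases mul_eq_zero.mp h with h' | h'
    · exact absurd h' hpx.ne'
    · rcases mul_eq_zero.mp h' with h'' | h''
      · exact absurd h'' hα.ne'
      · exact h''
  exact gibbs_eq (pi' x) (pistar x) (hpi'_pos x) (hstar_pos x) (hpi'_sum x)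
    (hstar_sum x) hDx y
end

section
/- (Lemma 1, extrapolation beyond the demonstrator) Let π̂ be any policy and let μ_E ∈ ℝ denote the expected reward of the expert demonstrations. If J(π*) − μ_E > α · ∑_x p(x) · KL(π̂(·|x) ‖ π*(·|x)) − α · ∑_x p(x) · KL(π̂(·|x) ‖ πref(·|x)), then the expected reward of π̂ exceeds that of the demonstrator: ∑_x p(x) · ∑_y π̂(y|x) · r(x,y) > μ_E. -/
/-- Lemma 1, extrapolation beyond the demonstrator: if
J(π*) − μ_E > α · ∑_x p(x) · KL(π̂(·|x) ‖ π*(·|x)) − α · ∑_x p(x) · KL(π̂(·|x) ‖ πref(·|x)),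
then the expected reward of π̂ exceeds that of the demonstrator. -/
theorem extrapolation_beyond_demonstrator
    {X Y : Type*} [Fintype X] [Fintype Y] [Nonempty X] [Nonempty Y]
    (p : X → ℝ) (hp_nonneg : ∀ x, 0 ≤ p x) (hp_sum : ∑ x, p x = 1)
    (piref : X → Y → ℝ)
    (href_pos : ∀ x y, 0 < piref x y)
    (href_sum : ∀ x, ∑ y, piref x y = 1)
    (pihat : X → Y → ℝ)
    (hpihat_pos : ∀ x y, 0 < pihat x y)
    (hpihat_sum : ∀ x, ∑ y, pihat x y = 1)
    (r : X → Y → ℝ) (α : ℝ) (hα : 0 < α)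
    (Vstar : X → ℝ)
    (hV : ∀ x, Vstar x = α * Real.log (∑ y, piref x y * Real.exp (r x y / α)))
    (pistar : X → Y → ℝ)
    (hpistar : ∀ x y, pistar x y = piref x y * Real.exp ((r x y - Vstar x) / α))
    (muE : ℝ)
    (hgap : (∑ x, p x * ∑ y, pistar x y * (r x y - α * Real.log (pistar x y / piref x y)))
        - muE
      > α * (∑ x, p x * ∑ y, pihat x y * Real.log (pihat x y / pistar x y))
        - α * (∑ x, p x * ∑ y, pihat x y * Real.log (pihat x y / piref x y))) :
    ∑ x, p x * ∑ y, pihat x y * r x y > muE := by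
  have hαne : (α : ℝ) ≠ 0 := ne_of_gt hα
  have hpistar_pos : ∀ x y, 0 < pistar x y := by
    intro x y; rw [hpistar]; exact mul_pos (href_pos x y) (Real.exp_pos _)
  have hlog : ∀ x y, Real.log (pistar x y / piref x y) = (r x y - Vstar x) / α := by
    intro x y
    rw [hpistar, mul_comm, mul_div_assoc,
      div_self (ne_of_gt (href_pos x y)), mul_one, Real.log_exp]
  have hexpV : ∀ x, Real.exp (Vstar x / α) = ∑ y, piref x y * Real.exp (r x y / α) := by
    intro x
    have hS : 0 < ∑ y, piref x y * Real.exp (r x y / α) :=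
      Finset.sum_pos (fun y _ => mul_pos (href_pos x y) (Real.exp_pos _))
        Finset.univ_nonempty
    rw [hV x, mul_div_cancel_left₀ _ hαne, Real.exp_log hS]
  have hsum1 : ∀ x, ∑ y, pistar x y = 1 := by
    intro x
    have h1 : ∀ y, pistar x y
        = piref x y * Real.exp (r x y / α) * Real.exp (-(Vstar x / α)) := by
      intro y
      rw [hpistar, sub_div, Real.exp_sub, Real.exp_neg]
      ring
    rw [Finset.sum_congr rfl fun y _ => h1 y, ← Finset.sum_mul, ← hexpV x,
      ← Real.exp_add, add_neg_cancel, Real.exp_zero]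
  have key : ∀ x, ∑ y, pihat x y * r x y
      = (∑ y, pistar x y * (r x y - α * Real.log (pistar x y / piref x y)))
        - α * (∑ y, pihat x y * Real.log (pihat x y / pistar x y))
        + α * (∑ y, pihat x y * Real.log (pihat x y / piref x y)) := by
    intro x
    have hB : ∑ y, pistar x y * (r x y - α * Real.log (pistar x y / piref x y))
        = Vstar x := by
      have h1 : ∀ y, pistar x y * (r x y - α * Real.log (pistar x y / piref x y))
          = pistar x y * Vstar x := by
        intro y
        rw [hlog x y]
        field_simp
        ring
      rw [Finset.sum_congr rfl fun y _ => h1 y, ← Finset.sum_mul, hsum1 x, one_mul]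
    have hDC : α * (∑ y, pihat x y * Real.log (pihat x y / piref x y))
        - α * (∑ y, pihat x y * Real.log (pihat x y / pistar x y))
        = (∑ y, pihat x y * r x y) - Vstar x := by
      have h1 : ∀ y, α * (pihat x y * Real.log (pihat x y / piref x y))
          - α * (pihat x y * Real.log (pihat x y / pistar x y))
          = pihat x y * r x y - pihat x y * Vstar x := by
        intro y
        have e1 : Real.log (pihat x y / piref x y)
            = Real.log (pihat x y) - Real.log (piref x y) :=
          Real.log_div (ne_of_gt (hpihat_pos x y)) (ne_of_gt (href_pos x y))
        have e2 : Real.log (pihat x y / pistar x y)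
            = Real.log (pihat x y) - Real.log (pistar x y) :=
          Real.log_div (ne_of_gt (hpihat_pos x y)) (ne_of_gt (hpistar_pos x y))
        have e3 : Real.log (pistar x y) - Real.log (piref x y)
            = (r x y - Vstar x) / α := by
          rw [← Real.log_div (ne_of_gt (hpistar_pos x y)) (ne_of_gt (href_pos x y))]
          exact hlog x y
        have e4 : α * ((r x y - Vstar x) / α) = r x y - Vstar x := by
          field_simp
        calc α * (pihat x y * Real.log (pihat x y / piref x y))
            - α * (pihat x y * Real.log (pihat x y / pistar x y))
            = pihat x y * (α * (Real.log (pistar x y) - Real.log (piref x y))) := by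
              rw [e1, e2]; ring
          _ = pihat x y * (r x y - Vstar x) := by rw [e3, e4]
          _ = pihat x y * r x y - pihat x y * Vstar x := by ring
      have h2 : α * (∑ y, pihat x y * Real.log (pihat x y / piref x y))
          - α * (∑ y, pihat x y * Real.log (pihat x y / pistar x y))
          = ∑ y, (α * (pihat x y * Real.log (pihat x y / piref x y))
            - α * (pihat x y * Real.log (pihat x y / pistar x y))) := by
        rw [Finset.sum_sub_distrib, Finset.mul_sum, Finset.mul_sum]
      rw [h2, Finset.sum_congr rfl fun y _ => h1 y, Finset.sum_sub_distrib,
        ← Finset.sum_mul, hpihat_sum x, one_mul]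
    rw [hB]
    linarith [hDC]
  have main : ∑ x, p x * ∑ y, pihat x y * r x y
      = (∑ x, p x * ∑ y, pistar x y * (r x y - α * Real.log (pistar x y / piref x y)))
        - α * (∑ x, p x * ∑ y, pihat x y * Real.log (pihat x y / pistar x y))
        + α * (∑ x, p x * ∑ y, pihat x y * Real.log (pihat x y / piref x y)) := by
    have h1 : ∀ x, p x * ∑ y, pihat x y * r x y
        = p x * (∑ y, pistar x y * (r x y - α * Real.log (pistar x y / piref x y)))
          - α * (p x * ∑ y, pihat x y * Real.log (pihat x y / pistar x y))
          + α * (p x * ∑ y, pihat x y * Real.log (pihat x y / piref x y)) := by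
      intro x; rw [key x]; ring
    rw [Finset.sum_congr rfl fun x _ => h1 x, Finset.sum_add_distrib,
      Finset.sum_sub_distrib, ← Finset.mul_sum, ← Finset.mul_sum]
  linarith [hgap, main]
end

section
/- (Lemma 1, variant comparing expected rewards directly) Let π̂ be any policy and let μ_E ∈ ℝ denote the expected reward of the expert demonstrations. If ∑_x p(x) · ∑_y π*(y|x) · r(x,y) − μ_E > α · ∑_x p(x) · KL(π̂(·|x) ‖ π*(·|x)) − α · ∑_x p(x) · KL(π̂(·|x) ‖ πref(·|x)) + α · ∑_x p(x) · KL(π*(·|x) ‖ πref(·|x)), then ∑_x p(x) · ∑_y π̂(y|x) · r(x,y) > μ_E. -/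
/-- Lemma 1, variant comparing expected rewards directly. -/
theorem extrapolation_beyond_demonstrator_rewards
    {X Y : Type*} [Fintype X] [Fintype Y] [Nonempty X] [Nonempty Y]
    (p : X → ℝ) (hp_nonneg : ∀ x, 0 ≤ p x) (hp_sum : ∑ x, p x = 1)
    (piref : X → Y → ℝ)
    (href_pos : ∀ x y, 0 < piref x y)
    (href_sum : ∀ x, ∑ y, piref x y = 1)
    (pihat : X → Y → ℝ)
    (hpihat_pos : ∀ x y, 0 < pihat x y)
    (hpihat_sum : ∀ x, ∑ y, pihat x y = 1)
    (r : X → Y → ℝ) (α : ℝ) (hα : 0 < α)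
    (Vstar : X → ℝ)
    (hV : ∀ x, Vstar x = α * Real.log (∑ y, piref x y * Real.exp (r x y / α)))
    (pistar : X → Y → ℝ)
    (hpistar : ∀ x y, pistar x y = piref x y * Real.exp ((r x y - Vstar x) / α))
    (muE : ℝ)
    (hgap : (∑ x, p x * ∑ y, pistar x y * r x y) - muE
      > α * (∑ x, p x * ∑ y, pihat x y * Real.log (pihat x y / pistar x y))
        - α * (∑ x, p x * ∑ y, pihat x y * Real.log (pihat x y / piref x y))
        + α * (∑ x, p x * ∑ y, pistar x y * Real.log (pistar x y / piref x y))) :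
    ∑ x, p x * ∑ y, pihat x y * r x y > muE := by
  have hα' : α ≠ 0 := ne_of_gt hα
  have hpistar_pos : ∀ x y, 0 < pistar x y := by
    intro x y
    rw [hpistar]
    exact mul_pos (href_pos x y) (Real.exp_pos _)
  -- sum of pistar is 1
  have hS_pos : ∀ x, 0 < ∑ y, piref x y * Real.exp (r x y / α) := by
    intro x
    exact Finset.sum_pos (fun y _ => mul_pos (href_pos x y) (Real.exp_pos _))
      Finset.univ_nonempty
  have hexpV : ∀ x, Real.exp (Vstar x / α) = ∑ y, piref x y * Real.exp (r x y / α) := by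
    intro x
    rw [hV x]
    rw [mul_div_cancel_left₀ _ hα']
    exact Real.exp_log (hS_pos x)
  have hpistar_sum : ∀ x, ∑ y, pistar x y = 1 := by
    intro x
    have : ∀ y, pistar x y = piref x y * Real.exp (r x y / α) * (Real.exp (Vstar x / α))⁻¹ := by
      intro y
      rw [hpistar, sub_div, Real.exp_sub]
      ring
    rw [Finset.sum_congr rfl (fun y _ => this y), ← Finset.sum_mul, hexpV x,
      mul_inv_cancel₀ (ne_of_gt (hS_pos x))]
  have hlog : ∀ x y, Real.log (pistar x y) = Real.log (piref x y) + (r x y - Vstar x) / α := by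
    intro x y
    rw [hpistar, Real.log_mul (ne_of_gt (href_pos x y)) (ne_of_gt (Real.exp_pos _)),
      Real.log_exp]
  -- key per-prompt identity
  have key : ∀ x,
      α * (∑ y, pihat x y * Real.log (pihat x y / pistar x y))
        - α * (∑ y, pihat x y * Real.log (pihat x y / piref x y))
        + α * (∑ y, pistar x y * Real.log (pistar x y / piref x y))
      = (∑ y, pistar x y * r x y) - (∑ y, pihat x y * r x y) := by
    intro x
    have e1 : ∀ y, α * (pihat x y * Real.log (pihat x y / pistar x y))
        - α * (pihat x y * Real.log (pihat x y / piref x y))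
        + α * (pistar x y * Real.log (pistar x y / piref x y))
        = (pistar x y * r x y - pihat x y * r x y)
          + Vstar x * (pihat x y - pistar x y) := by
      intro y
      rw [Real.log_div (ne_of_gt (hpihat_pos x y)) (ne_of_gt (hpistar_pos x y)),
        Real.log_div (ne_of_gt (hpihat_pos x y)) (ne_of_gt (href_pos x y)),
        Real.log_div (ne_of_gt (hpistar_pos x y)) (ne_of_gt (href_pos x y)),
        hlog x y]
      field_simp
      ring
    calc α * (∑ y, pihat x y * Real.log (pihat x y / pistar x y))
        - α * (∑ y, pihat x y * Real.log (pihat x y / piref x y))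
        + α * (∑ y, pistar x y * Real.log (pistar x y / piref x y))
        = ∑ y, (α * (pihat x y * Real.log (pihat x y / pistar x y))
            - α * (pihat x y * Real.log (pihat x y / piref x y))
            + α * (pistar x y * Real.log (pistar x y / piref x y))) := by
          rw [Finset.sum_add_distrib, Finset.sum_sub_distrib, ← Finset.mul_sum,
            ← Finset.mul_sum, ← Finset.mul_sum]
      _ = ∑ y, ((pistar x y * r x y - pihat x y * r x y)
            + Vstar x * (pihat x y - pistar x y)) := by
          exact Finset.sum_congr rfl (fun y _ => e1 y)
      _ = (∑ y, pistar x y * r x y) - (∑ y, pihat x y * r x y) := by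
          rw [Finset.sum_add_distrib, Finset.sum_sub_distrib, ← Finset.mul_sum,
            Finset.sum_sub_distrib, hpihat_sum x, hpistar_sum x]
          ring
  have hRHS : α * (∑ x, p x * ∑ y, pihat x y * Real.log (pihat x y / pistar x y))
        - α * (∑ x, p x * ∑ y, pihat x y * Real.log (pihat x y / piref x y))
        + α * (∑ x, p x * ∑ y, pistar x y * Real.log (pistar x y / piref x y))
      = (∑ x, p x * ∑ y, pistar x y * r x y) - (∑ x, p x * ∑ y, pihat x y * r x y) := by
    rw [Finset.mul_sum, Finset.mul_sum, Finset.mul_sum, ← Finset.sum_sub_distrib,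
      ← Finset.sum_add_distrib, ← Finset.sum_sub_distrib]
    apply Finset.sum_congr rfl
    intro x _
    linear_combination p x * key x
  rw [hRHS] at hgap
  linarith
end

section
/- (Jensen bound relating distributional and point-wise Bradley–Terry losses) Fix a prompt x, and let π^w and π^l be two policies. Then −log σ(∑_y π^w(y|x) · r(x,y) − ∑_y π^l(y|x) · r(x,y)) ≤ ∑_{y_w} ∑_{y_l} π^w(y_w|x) · π^l(y_l|x) · (−log σ(r(x,y_w) − r(x,y_l))); that is, the Bradley–Terry loss evaluated at the difference of expected rewards is at most the expected point-wise Bradley–Terry loss over independent samples y_w ∼ π^w(·|x), y_l ∼ π^l(·|x). -/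
lemma softplus_pos (z : ℝ) : 0 < 1 + Real.exp (-z) := by positivity

lemma neg_log_sigma (z : ℝ) :
    -Real.log (1 / (1 + Real.exp (-z))) = Real.log (1 + Real.exp (-z)) := by
  rw [one_div, Real.log_inv, neg_neg]

lemma hasDerivAt_inner (z : ℝ) :
    HasDerivAt (fun z : ℝ => 1 + Real.exp (-z)) (-Real.exp (-z)) z := by
  have h := ((Real.hasDerivAt_exp (-z)).comp z (hasDerivAt_neg z)).const_add 1
  simpa [mul_comm] using h

lemma hasDerivAt_f (z : ℝ) :
    HasDerivAt (fun z : ℝ => Real.log (1 + Real.exp (-z)))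
      (-Real.exp (-z) / (1 + Real.exp (-z))) z :=
  (hasDerivAt_inner z).log (ne_of_gt (softplus_pos z))

lemma hasDerivAt_f' (z : ℝ) :
    HasDerivAt (fun z : ℝ => -Real.exp (-z) / (1 + Real.exp (-z)))
      (Real.exp (-z) / (1 + Real.exp (-z)) ^ 2) z := by
  have hu : HasDerivAt (fun z : ℝ => -Real.exp (-z)) (Real.exp (-z)) z := by
    exact ((Real.hasDerivAt_exp (-z)).comp z (hasDerivAt_neg z)).neg.congr_deriv (by ring)
  have h := hu.div (hasDerivAt_inner z) (ne_of_gt (softplus_pos z))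
  exact h.congr_deriv (by ring)

lemma deriv_f : deriv (fun z : ℝ => Real.log (1 + Real.exp (-z)))
    = fun z => -Real.exp (-z) / (1 + Real.exp (-z)) :=
  funext fun z => (hasDerivAt_f z).deriv

lemma convexOn_f : ConvexOn ℝ Set.univ (fun z : ℝ => Real.log (1 + Real.exp (-z))) := by
  apply convexOn_of_deriv2_nonneg convex_univ
  · exact fun z _ => (hasDerivAt_f z).continuousAt.continuousWithinAt
  · exact fun z _ => (hasDerivAt_f z).differentiableAt.differentiableWithinAt
  · intro z _
    rw [deriv_f]
    exact (hasDerivAt_f' z).differentiableAt.differentiableWithinAt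
  · intro z _
    rw [show deriv^[2] = deriv ∘ deriv from rfl, Function.comp_apply, deriv_f,
      (hasDerivAt_f' z).deriv]
    positivity

/-- Jensen bound relating distributional and point-wise Bradley–Terry
losses: the Bradley–Terry loss evaluated at the difference of expected rewards is at most
the expected point-wise Bradley–Terry loss over independent samples. -/
theorem bradley_terry_jensen_bound
    {X Y : Type*} [Fintype X] [Fintype Y] [Nonempty X] [Nonempty Y]
    (piw pil : X → Y → ℝ)
    (hpiw_pos : ∀ x y, 0 < piw x y) (hpiw_sum : ∀ x, ∑ y, piw x y = 1)
    (hpil_pos : ∀ x y, 0 < pil x y) (hpil_sum : ∀ x, ∑ y, pil x y = 1)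
    (r : X → Y → ℝ)
    (σ : ℝ → ℝ) (hσ : ∀ z, σ z = 1 / (1 + Real.exp (-z)))
    (x : X) :
    -Real.log (σ ((∑ y, piw x y * r x y) - ∑ y, pil x y * r x y))
      ≤ ∑ yw, ∑ yl, piw x yw * pil x yl * (-Real.log (σ (r x yw - r x yl))) := by
  simp only [hσ, neg_log_sigma]
  set f : ℝ → ℝ := fun z => Real.log (1 + Real.exp (-z)) with hf
  set w : Y × Y → ℝ := fun p => piw x p.1 * pil x p.2 with hw
  set pt : Y × Y → ℝ := fun p => r x p.1 - r x p.2 with hpt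
  have hw0 : ∀ p ∈ Finset.univ (α := Y × Y), 0 ≤ w p :=
    fun p _ => le_of_lt (mul_pos (hpiw_pos x p.1) (hpil_pos x p.2))
  have hw1 : ∑ p : Y × Y, w p = 1 := by
    rw [Fintype.sum_prod_type, hw]
    simp only [← Finset.mul_sum, hpil_sum, mul_one, hpiw_sum]
  have hmem : ∀ p ∈ Finset.univ (α := Y × Y), pt p ∈ Set.univ := fun _ _ => trivial
  have key := convexOn_f.map_sum_le hw0 hw1 hmem
  have hsum : ∑ p : Y × Y, w p • pt p
      = (∑ y, piw x y * r x y) - ∑ y, pil x y * r x y := by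
    rw [Fintype.sum_prod_type]
    simp only [hw, hpt, smul_eq_mul]
    have h1 : ∀ yw, ∑ yl, piw x yw * pil x yl * (r x yw - r x yl)
        = piw x yw * r x yw - piw x yw * ∑ yl, pil x yl * r x yl := by
      intro yw
      calc ∑ yl, piw x yw * pil x yl * (r x yw - r x yl)
          = ∑ yl, (piw x yw * r x yw * pil x yl - piw x yw * (pil x yl * r x yl)) := by
            apply Finset.sum_congr rfl; intros; ring
        _ = piw x yw * r x yw * ∑ yl, pil x yl
            - piw x yw * ∑ yl, pil x yl * r x yl := by
            rw [Finset.sum_sub_distrib, ← Finset.mul_sum, ← Finset.mul_sum]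
        _ = _ := by rw [hpil_sum, mul_one]
    simp only [h1]
    rw [Finset.sum_sub_distrib, ← Finset.sum_mul, hpiw_sum, one_mul]
  calc f ((∑ y, piw x y * r x y) - ∑ y, pil x y * r x y)
      = f (∑ p : Y × Y, w p • pt p) := by rw [hsum]
    _ ≤ ∑ p : Y × Y, w p * f (pt p) := by simpa using key
    _ = ∑ yw, ∑ yl, piw x yw * pil x yl * f (r x yw - r x yl) := by
        rw [Fintype.sum_prod_type]
end
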